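/- Let K ≥ 2 be an integer. If X is a K×K real matrix satisfying X(M − I) = (M − I)X = I − (1/K)J and X·𝟙 = 0, where I is the identity matrix, J the all-ones matrix and 𝟙 = (1,…,1), then X = B. That is, B is the unique matrix with these properties. -/

import Mathlib

open scoped BigOperators

/-- Cyclic successor on `Fin K`. -/
def cycSucc {K : ℕ} (i : Fin K) : Fin K := ⟨((i : ℕ) + 1) % K, Nat.mod_lt _ i.pos⟩

/-- The K×K matrix B with B_{ij} = (1/(2K))(−(K−1) + 2·((j−i) mod K)). -/
noncomputable def Bmat (K : ℕ) : Matrix (Fin K) (Fin K) ℝ :=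
  Matrix.of fun i j => (1 / (2 * (K : ℝ))) * (-((K : ℝ) - 1) + 2 * (((j - i : Fin K) : ℕ) : ℝ))

/-- The cyclic shift permutation matrix, M_{ij} = 1 iff j ≡ i+1 (mod K). -/
def Mmat (K : ℕ) : Matrix (Fin K) (Fin K) ℝ :=
  Matrix.of fun i j => if j = cycSucc i then 1 else 0

/-- The all-ones K×K matrix. -/
def Jmat (K : ℕ) : Matrix (Fin K) (Fin K) ℝ := Matrix.of fun _ _ => 1

/-! The entries of `B` satisfy `B (i+1) j - B i j = δ i j - 1/K`, i.e. `(M - 1) B = 1 - J/K`,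
and the columns of `B` sum to zero, i.e. `J B = 0`. Since `X 𝟙 = 0` gives `X J = 0`,
`X = X (1 - J/K) = X (M - 1) B = (1 - J/K) B = B`. -/

open Matrix

lemma Fin.val_sub_one_add_one {K : ℕ} [NeZero K] (a : Fin K) :
    ((a - 1 : Fin K) : ℕ) + 1 = if a = 0 then K else a := by
  obtain ⟨n, rfl⟩ := Nat.exists_eq_succ_of_ne_zero (NeZero.ne K)
  rw [Fin.coe_sub_one]
  split_ifs with ha
  · rfl
  · have : (a : ℕ) ≠ 0 := Fin.val_ne_zero_iff.mpr ha
    omega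

lemma Fin.two_mul_sum_val (K : ℕ) : 2 * ∑ a : Fin K, ((a : ℕ) : ℝ) = K * (K - 1) := by
  have := congrArg (Nat.cast : ℕ → ℝ) (Finset.sum_range_id_mul_two K)
  rcases K with _ | K
  · simp
  · rw [Fin.sum_univ_eq_sum_range (fun i => (i : ℝ))]
    push_cast at this ⊢
    linarith

lemma cycSucc_eq_add_one {K : ℕ} [NeZero K] (i : Fin K) : cycSucc i = i + 1 := by
  ext
  simp [cycSucc, Fin.val_add, Nat.add_mod]

lemma Mmat_mul_apply {K : ℕ} [NeZero K] {n : Type*} (A : Matrix (Fin K) n ℝ) (i : Fin K)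
    (j : n) :
    (Mmat K * A) i j = A (i + 1) j := by
  simp [Mmat, mul_apply, cycSucc_eq_add_one]

lemma Bmat_add_one_sub_apply {K : ℕ} [NeZero K] (i j : Fin K) :
    Bmat K (i + 1) j - Bmat K i j = (1 : Matrix (Fin K) (Fin K) ℝ) i j - (K : ℝ)⁻¹ := by
  have hK : (K : ℝ) ≠ 0 := Nat.cast_ne_zero.mpr (NeZero.ne K)
  have hshift : j - (i + 1) = (j - i) - 1 := by abel
  have hval := congrArg (Nat.cast : ℕ → ℝ) (Fin.val_sub_one_add_one (j - i))
  have hdiag : (i = j) ↔ j - i = 0 := by rw [sub_eq_zero, eq_comm]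
  simp only [Bmat, of_apply, one_apply, hshift, hdiag]
  push_cast at hval
  split_ifs at hval ⊢ with h
  · rw [h] at hval ⊢
    simp only [zero_sub, Fin.val_zero, Nat.cast_zero] at hval ⊢
    field_simp
    linarith
  · field_simp
    linarith

lemma Mmat_sub_one_mul_Bmat (K : ℕ) : (Mmat K - 1) * Bmat K = 1 - (K : ℝ)⁻¹ • Jmat K := by
  rcases eq_zero_or_neZero K with rfl | _
  · exact Subsingleton.elim _ _
  ext i j
  rw [Matrix.sub_mul, Matrix.one_mul, Matrix.sub_apply, Mmat_mul_apply, Bmat_add_one_sub_apply]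
  simp [Jmat]

lemma Jmat_eq_vecMulVec (K : ℕ) : Jmat K = vecMulVec 1 1 := by
  ext
  simp [Jmat, vecMulVec]

lemma mul_Jmat_eq_zero {K : ℕ} {m : Type*} {X : Matrix m (Fin K) ℝ} (h : X *ᵥ 1 = 0) :
    X * Jmat K = 0 := by
  rw [Jmat_eq_vecMulVec, mul_vecMulVec, h, zero_vecMulVec]

lemma Jmat_mul_eq_zero {K : ℕ} {n : Type*} {X : Matrix (Fin K) n ℝ} (h : 1 ᵥ* X = 0) :
    Jmat K * X = 0 := by
  rw [Jmat_eq_vecMulVec, vecMulVec_mul, h]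
  ext
  simp [vecMulVec]

lemma one_vecMul_Bmat (K : ℕ) : 1 ᵥ* Bmat K = 0 := by
  rcases eq_zero_or_neZero K with rfl | _
  · exact Subsingleton.elim _ _
  ext j
  have hsum : ∑ i : Fin K, (((j - i : Fin K) : ℕ) : ℝ) = ∑ a : Fin K, ((a : ℕ) : ℝ) :=
    Fintype.sum_equiv (Equiv.subLeft j) _ _ (fun _ => rfl)
  simp only [vecMul, dotProduct, Pi.one_apply, one_mul, Bmat, of_apply, Pi.zero_apply]
  rw [← Finset.mul_sum, Finset.sum_add_distrib, ← Finset.mul_sum, hsum, Fin.two_mul_sum_val,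
    Finset.sum_const, Finset.card_univ, Fintype.card_fin, nsmul_eq_mul]
  ring

theorem Bmat_unique_general (K : ℕ) (X : Matrix (Fin K) (Fin K) ℝ)
    (h1 : X * (Mmat K - 1) = 1 - ((K : ℝ))⁻¹ • Jmat K)
    (h3 : X.mulVec (fun _ => (1 : ℝ)) = 0) :
    X = Bmat K := by
  calc X = X * (1 - (K : ℝ)⁻¹ • Jmat K) := by
        rw [Matrix.mul_sub, Matrix.mul_smul, mul_Jmat_eq_zero h3, smul_zero, sub_zero,
          Matrix.mul_one]
    _ = X * (Mmat K - 1) * Bmat K := by rw [Matrix.mul_assoc, Mmat_sub_one_mul_Bmat]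
    _ = Bmat K := by
        rw [h1, Matrix.sub_mul, Matrix.smul_mul, Jmat_mul_eq_zero (one_vecMul_Bmat K), smul_zero,
          sub_zero, Matrix.one_mul]

theorem Bmat_unique (K : ℕ) (hK : 2 ≤ K) (X : Matrix (Fin K) (Fin K) ℝ)
    (h1 : X * (Mmat K - 1) = 1 - ((K : ℝ))⁻¹ • Jmat K)
    (h2 : (Mmat K - 1) * X = 1 - ((K : ℝ))⁻¹ • Jmat K)
    (h3 : X.mulVec (fun _ => (1 : ℝ)) = 0) :
    X = Bmat K :=
  Bmat_unique_general K X h1 h3
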